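/- arXiv:2203.02462 — 5 statements merged into one kernel-verified Lean document; each statement's English description precedes it below -/
import Mathlib

section
/- Under the abstract realizability axioms: if (1, a) is realizable, then (1, a, a, …, a) ∈ ℤ^n is realizable for every n ≥ 2. -/
/-- **If `(1, a)` is realizable then `(1, a, …, a) ∈ ℤⁿ` is realizable for every `n ≥ 2`.**
Here realizability is an abstract predicate on integer vectors closed under precomposition
with injections of indices, coordinatewise integer scaling, appending a `0`, and the
composition rule: if `(1, a₂, …, aₙ)` and `(b₁, …, bₙ)` are realizable then so is
`(b₁, b₂ + a₂, …, bₙ + aₙ)`. -/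
theorem realizable_one_a_dots_a
    (R : ∀ n : ℕ, (Fin n → ℤ) → Prop)
    (hinj : ∀ (n k : ℕ) (a : Fin n → ℤ) (σ : Fin k → Fin n),
      Function.Injective σ → R n a → R k (a ∘ σ))
    (hscale : ∀ (n : ℕ) (a : Fin n → ℤ) (lam : Fin n → ℤ),
      R n a → R n (fun i => lam i * a i))
    (hzero : ∀ (n : ℕ) (a : Fin n → ℤ), R n a → R (n + 1) (Fin.snoc a 0))
    (hcomp : ∀ (n : ℕ) (a b : Fin (n + 1) → ℤ), a 0 = 1 →
      R (n + 1) a → R (n + 1) b →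
      R (n + 1) (fun i => if i = 0 then b 0 else b i + a i))
    (a : ℤ) (ha : R 2 ![1, a]) :
    ∀ n : ℕ, 2 ≤ n → R n (fun i => if (i : ℕ) = 0 then 1 else a) := by
  -- (1, a, 0, ..., 0) is realizable at every size ≥ 2
  have hw : ∀ m : ℕ, 2 ≤ m →
      R m (fun i : Fin m => if (i : ℕ) = 0 then 1 else if (i : ℕ) = 1 then a else 0) := by
    intro m hm
    obtain ⟨k, rfl⟩ : ∃ k, m = k + 2 := ⟨m - 2, by omega⟩
    induction k with
    | zero =>
      convert ha using 1
      funext i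
      fin_cases i <;> simp
    | succ k ih =>
      have h := hzero _ _ (ih (by omega))
      convert h using 1
      funext i
      induction i using Fin.lastCases with
      | last =>
        have hv : ((Fin.last (k + 2) : Fin (k + 3)) : ℕ) = k + 2 := rfl
        simp [Fin.snoc_last, hv]
      | cast j => simp [Fin.snoc_castSucc]
  intro n hn
  induction n with
  | zero => omega
  | succ n ih =>
    rcases Nat.lt_or_ge n 2 with h | h
    · -- n + 1 = 2
      have hn2 : n = 1 := by omega
      subst hn2
      convert ha using 1
      funext i
      fin_cases i <;> simp
    · -- inductive step
      have hv1 : ((1 : Fin (n + 1)) : ℕ) = 1 := by rw [Fin.val_one']; exact Nat.mod_eq_of_lt (by omega)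
      have hv := ih h
      have hb := hzero n _ hv
      have ha' := hinj (n + 1) (n + 1) _ (Equiv.swap 1 (Fin.last n))
        (Equiv.injective _) (hw (n + 1) (by omega))
      have ha'0 : ((fun i : Fin (n+1) => if (i : ℕ) = 0 then 1 else if (i : ℕ) = 1 then a else 0)
          ∘ (Equiv.swap 1 (Fin.last n))) 0 = 1 := by
        have h0 : Equiv.swap (1 : Fin (n+1)) (Fin.last n) 0 = 0 := by
          apply Equiv.swap_apply_of_ne_of_ne
          · intro hcontra
            have := congrArg (Fin.val) hcontra
            rw [hv1] at this
            simp at this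
          · intro hcontra
            have := congrArg (Fin.val) hcontra
            simp [Fin.val_last] at this
            omega
        simp [h0]
      have hres := hcomp n _ _ ha'0 ha' hb
      convert hres using 1
      funext i
      induction i using Fin.lastCases with
      | last =>
        have hlast0 : (Fin.last n : Fin (n+1)) ≠ 0 := by
          intro hcontra
          have := congrArg (Fin.val) hcontra
          simp [Fin.val_last] at this
          omega
        have hswap : Equiv.swap (1 : Fin (n+1)) (Fin.last n) (Fin.last n) = 1 :=
          Equiv.swap_apply_right _ _
        have hval : ((Fin.last n : Fin (n+1)) : ℕ) = n := rfl
        simp [hlast0, hswap, Fin.snoc_last, hval, hv1]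
        omega
      | cast j =>
        have hne0 : n ≠ 0 := by omega
        have hne1 : n ≠ 1 := by omega
        have hvall : ((Fin.last n : Fin (n+1)) : ℕ) = n := rfl
        by_cases hj : (j : ℕ) = 0
        · have h0 : Fin.castSucc j = (0 : Fin (n+1)) := by
            apply Fin.ext; simpa using hj
          rw [h0, if_pos rfl]
          have hs : Fin.snoc (α := fun _ => ℤ) (fun i : Fin n => if (i : ℕ) = 0 then 1 else a) (0 : ℤ)
              (0 : Fin (n+1)) = 1 := by
            rw [show (0 : Fin (n+1)) = Fin.castSucc ⟨0, by omega⟩ from rfl, Fin.snoc_castSucc]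
            simp
          rw [hs]
          simp
        · have hi0 : (Fin.castSucc j) ≠ (0 : Fin (n+1)) := by
            intro hcontra
            have := congrArg (Fin.val) hcontra
            simp at this
            exact hj this
          have hcl : Fin.castSucc j ≠ Fin.last n := by
            intro hc
            have := congrArg (Fin.val) hc
            simp [Fin.val_last] at this
            omega
          have hswap : Equiv.swap (1 : Fin (n+1)) (Fin.last n) (Fin.castSucc j) =
              if Fin.castSucc j = 1 then Fin.last n else Fin.castSucc j := by
            rw [Equiv.swap_apply_def]
            simp [hcl]
          simp only [if_neg hi0, Function.comp_apply, hswap, Fin.snoc_castSucc,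
            Fin.coe_castSucc, if_neg hj]
          by_cases hj1 : Fin.castSucc j = 1
          · rw [if_pos hj1]
            simp [hvall, hne0, hne1, hj]
          · rw [if_neg hj1]
            have hjval1 : (j : ℕ) ≠ 1 := by
              intro hc
              apply hj1
              apply Fin.ext
              rw [hv1, Fin.coe_castSucc, hc]
            simp [hj, hjval1]
end

section
/- Suppose the realizability predicate additionally satisfies: (a_1, a_2) is realizable if and only if a_1 a_2 is even (the case d odd, d ≠ 1,3,7), together with the closure axioms (R2), (R3). Then an integer vector (a_1, …, a_n) is realizable if and only if at most one of the a_i is odd. -/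
/-!
Two odd entries `aᵢ, aⱼ` obstruct realizability: restricting to them gives a pair with odd
product. Conversely, realizability is insensitive to zero entries (pad with zeros, then permute),
so after moving the odd entry, if any, to the front it suffices to realize `(t₀, t₁, …, tₙ)` with
`t₁, …, tₙ` even. By induction on `n` this is the composite of `(1, t₁, …, tₙ₋₁, 0)` with
`(t₀, 0, …, 0, tₙ)`, and the latter is the pair `(t₀, tₙ)` padded by zeros.
-/

namespace Realizability

def RestrictClosed (R : ∀ n : ℕ, (Fin n → ℤ) → Prop) : Prop :=
  ∀ (n k : ℕ) (a : Fin n → ℤ) (σ : Fin k → Fin n), Function.Injective σ → R n a → R k (a ∘ σ)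

def SnocZeroClosed (R : ∀ n : ℕ, (Fin n → ℤ) → Prop) : Prop :=
  ∀ (n : ℕ) (a : Fin n → ℤ), R n a → R (n + 1) (Fin.snoc a 0)

def CompClosed (R : ∀ n : ℕ, (Fin n → ℤ) → Prop) : Prop :=
  ∀ (n : ℕ) (a b : Fin (n + 1) → ℤ), a 0 = 1 → R (n + 1) a → R (n + 1) b →
    R (n + 1) (fun i => if i = 0 then b 0 else b i + a i)

variable {R : ∀ n : ℕ, (Fin n → ℤ) → Prop}

theorem append_zeros (hzero : SnocZeroClosed R) {n : ℕ} {a : Fin n → ℤ} (ha : R n a) :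
    ∀ k : ℕ, R (n + k) (Fin.append a (0 : Fin k → ℤ))
  | 0 => by simpa [Fin.append_right_nil] using ha
  | k + 1 => by
    have hsnoc : (0 : Fin (k + 1) → ℤ) = Fin.snoc 0 0 := by
      ext i; refine Fin.lastCases ?_ (fun j => ?_) i <;> simp
    rw [hsnoc, Fin.append_snoc]
    exact hzero _ _ (append_zeros hzero ha k)

theorem of_comp_of_support_subset (hinj : RestrictClosed R) (hzero : SnocZeroClosed R)
    {n m : ℕ} {c : Fin m → ℤ} {σ : Fin n → Fin m} (hσ : σ.Injective)
    (hc : Function.support c ⊆ Set.range σ) (h : R n (c ∘ σ)) : R m c := by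
  obtain ⟨k, rfl⟩ := Nat.exists_eq_add_of_le (Fin.le_of_injective σ hσ)
  obtain ⟨π, hπ⟩ := Equiv.Perm.exists_extending_pair (Fin.castAdd k) σ
    (Fin.castAdd_injective _ _) hσ
  convert hinj _ _ _ π.symm π.symm.injective (append_zeros hzero h k) using 1
  funext i
  obtain ⟨p, rfl⟩ := π.surjective i
  refine Fin.addCases (fun j => ?_) (fun j => ?_) p
  · simp [← hπ]
  · simp only [Function.comp_apply, Equiv.symm_apply_apply, Fin.append_right, Pi.zero_apply]
    refine Function.notMem_support.mp fun hj => ?_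
    obtain ⟨j', hj'⟩ := hc hj
    rw [← hπ] at hj'
    have := congrArg Fin.val (π.injective hj')
    simp only [Fin.val_castAdd, Fin.val_natAdd] at this
    omega

theorem of_even_of_ne_zero (hinj : RestrictClosed R) (hzero : SnocZeroClosed R)
    (hcomp : CompClosed R) (hpair : ∀ x y : ℤ, Even (x * y) → R 2 ![x, y]) :
    ∀ {n : ℕ} (t : Fin (n + 1) → ℤ), (∀ i ≠ 0, Even (t i)) → R (n + 1) t
  | 0, t, _ => by
    convert hinj 2 1 ![t 0, 0] (fun _ => 0) (Function.injective_of_subsingleton _)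
      (hpair _ _ (by simp))
    funext i; fin_cases i; rfl
  | n + 1, t, ht => by
    have hlast : Fin.last (n + 1) ≠ 0 := Fin.last_pos.ne'
    set a : Fin (n + 2) → ℤ := Function.update (Function.update t 0 1) (Fin.last _) 0
    set b : Fin (n + 2) → ℤ := fun i => if i = 0 ∨ i = Fin.last _ then t i else 0
    have ha : R (n + 2) a := by
      refine of_comp_of_support_subset hinj hzero (Fin.castSucc_injective _) (fun i hi => ?_)
        (of_even_of_ne_zero hinj hzero hcomp hpair _ fun i hi => ?_)
      · obtain ⟨j, rfl⟩ | rfl := Fin.eq_castSucc_or_eq_last i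
        · exact ⟨j, rfl⟩
        · simp [a] at hi
      · simpa [a, hi] using ht i.castSucc (by simpa using hi)
    have hb : R (n + 2) b := by
      refine of_comp_of_support_subset hinj hzero (σ := ![0, Fin.last _])
        (injective_pair_iff_ne.mpr hlast.symm) (fun i hi => ?_) ?_
      · simp only [Function.mem_support, b, ne_eq, ite_eq_right_iff, not_forall] at hi
        obtain ⟨rfl | rfl, -⟩ := hi <;> simp
      · convert hpair (t 0) (t (Fin.last _)) ((ht _ hlast).mul_left _)
        funext i; fin_cases i <;> simp [b]
    convert hcomp _ a b (by simp [a]) ha hb using 1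
    funext i
    by_cases h0 : i = 0
    · simp [h0, b]
    by_cases hl : i = Fin.last _
    · simp [hl, a, b, hlast]
    · simp [h0, hl, a, b]

theorem of_even_of_ne (hinj : RestrictClosed R) (hzero : SnocZeroClosed R)
    (hcomp : CompClosed R) (hpair : ∀ x y : ℤ, Even (x * y) → R 2 ![x, y]) :
    ∀ {n : ℕ} (t : Fin n → ℤ) (k : Fin n), (∀ i ≠ k, Even (t i)) → R n t
  | _ + 1, t, k, ht => by
    have hswap : R _ (t ∘ Equiv.swap 0 k) :=
      of_even_of_ne_zero hinj hzero hcomp hpair _ fun i hi =>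
        ht _ fun h => hi (by simpa using congrArg (Equiv.swap 0 k) h)
    simpa [Function.comp_def] using hinj _ _ _ _ (Equiv.swap 0 k).injective hswap

theorem of_forall_even (hinj : RestrictClosed R) (hzero : SnocZeroClosed R)
    (hcomp : CompClosed R) (hpair : ∀ x y : ℤ, Even (x * y) → R 2 ![x, y])
    {n : ℕ} (t : Fin n → ℤ) (ht : ∀ i, Even (t i)) : R n t := by
  have hcons : R (n + 1) (Fin.cons 0 t) :=
    of_even_of_ne_zero hinj hzero hcomp hpair _ fun i hi => by
      obtain ⟨j, rfl⟩ := Fin.exists_succ_eq.mpr hi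
      simpa using ht j
  simpa using hinj _ _ _ _ (Fin.succ_injective _) hcons

theorem not_of_odd_of_odd (hinj : RestrictClosed R)
    (hpair : ∀ x y : ℤ, R 2 ![x, y] → Even (x * y)) {n : ℕ} {t : Fin n → ℤ} {i j : Fin n}
    (hij : i ≠ j) (hi : Odd (t i)) (hj : Odd (t j)) : ¬R n t := fun h => by
  have hrestrict : t ∘ ![i, j] = ![t i, t j] := by
    funext k; fin_cases k <;> rfl
  have := hpair (t i) (t j) (hrestrict ▸ hinj _ _ _ _ (injective_pair_iff_ne.mpr hij) h)
  exact Int.not_even_iff_odd.mpr (hi.mul hj) this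

end Realizability

theorem realizable_iff_at_most_one_odd_general
    (R : ∀ n : ℕ, (Fin n → ℤ) → Prop)
    (hinj : ∀ (n k : ℕ) (a : Fin n → ℤ) (σ : Fin k → Fin n),
      Function.Injective σ → R n a → R k (a ∘ σ))
    (hzero : ∀ (n : ℕ) (a : Fin n → ℤ), R n a → R (n + 1) (Fin.snoc a 0))
    (hcomp : ∀ (n : ℕ) (a b : Fin (n + 1) → ℤ), a 0 = 1 →
      R (n + 1) a → R (n + 1) b →
      R (n + 1) (fun i => if i = 0 then b 0 else b i + a i))
    (hbase : ∀ a₁ a₂ : ℤ, R 2 ![a₁, a₂] ↔ Even (a₁ * a₂)) :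
    ∀ (n : ℕ) (a : Fin n → ℤ),
      R n a ↔ ∀ i j : Fin n, Odd (a i) → Odd (a j) → i = j := by
  intro n a
  refine ⟨fun h i j hi hj => ?_, fun h => ?_⟩
  · by_contra hij
    exact Realizability.not_of_odd_of_odd hinj (fun x y => (hbase x y).mp) hij hi hj h
  have hpair : ∀ x y : ℤ, Even (x * y) → R 2 ![x, y] := fun x y => (hbase x y).mpr
  by_cases hodd : ∃ k, Odd (a k)
  · obtain ⟨k, hk⟩ := hodd
    refine Realizability.of_even_of_ne hinj hzero hcomp hpair a k fun i hik => ?_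
    exact Int.not_odd_iff_even.mp fun hi => hik (h i k hi hk)
  · exact Realizability.of_forall_even hinj hzero hcomp hpair a fun i =>
      Int.not_odd_iff_even.mp fun hi => hodd ⟨i, hi⟩

/-- **Realizability for `d` odd, `d ≠ 1, 3, 7`: a vector is realizable iff at most one entry
is odd.**  Let `R` be an abstract realizability predicate on integer vectors closed under
precomposition with injections of indices, coordinatewise integer scaling, appending a `0`,
and the composition rule (if `(1, a₂, …, aₙ)` and `(b₁, …, bₙ)` are realizable then so is
`(b₁, b₂ + a₂, …, bₙ + aₙ)`), and satisfying the base characterization that `(a₁, a₂)` is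
realizable iff `a₁ a₂` is even.  Then `(a₁, …, aₙ)` is realizable iff at most one `aᵢ` is
odd. -/
theorem realizable_iff_at_most_one_odd
    (R : ∀ n : ℕ, (Fin n → ℤ) → Prop)
    (hinj : ∀ (n k : ℕ) (a : Fin n → ℤ) (σ : Fin k → Fin n),
      Function.Injective σ → R n a → R k (a ∘ σ))
    (hscale : ∀ (n : ℕ) (a : Fin n → ℤ) (lam : Fin n → ℤ),
      R n a → R n (fun i => lam i * a i))
    (hzero : ∀ (n : ℕ) (a : Fin n → ℤ), R n a → R (n + 1) (Fin.snoc a 0))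
    (hcomp : ∀ (n : ℕ) (a b : Fin (n + 1) → ℤ), a 0 = 1 →
      R (n + 1) a → R (n + 1) b →
      R (n + 1) (fun i => if i = 0 then b 0 else b i + a i))
    (hbase : ∀ a₁ a₂ : ℤ, R 2 ![a₁, a₂] ↔ Even (a₁ * a₂)) :
    ∀ (n : ℕ) (a : Fin n → ℤ),
      R n a ↔ ∀ i j : Fin n, Odd (a i) → Odd (a j) → i = j :=
  realizable_iff_at_most_one_odd_general R hinj hzero hcomp hbase
end

section
/- Let Λ = ℚ[exterior generators x_1, …, x_n, y_1, …, y_n] be the free graded-commutative algebra with |x_i| = d (d even, so the x_i commute and x_i² ≠ 0) and |y_i| = 2d−1 (odd degree, so the y_i are exterior), with differential dx_i = 0, dy_i = x_i². Then every dg-algebra automorphism φ of Λ has the form φ(x_i) = λ_i x_{σ(i)}, φ(y_i) = λ_i² y_{σ(i)} for some permutation σ ∈ Σ_n and scalars λ_i ∈ ℚ^×; consequently Aut(Λ) ≅ Σ_n ⋉ (ℚ^×)^n. -/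
/-!
Evaluating `(∑ⱼ aⱼ xⱼ)² = ∑ⱼ bⱼ xⱼ²` at `eⱼ` and at `eⱼ + eₖ` gives `bⱼ = aⱼ²` and `2 aⱼ aₖ = 0`,
so every row of `A` has at most one nonzero entry and `B = A ⊙ A`. As `A` is invertible no column
vanishes either, so the nonzero entries lie on the graph of a permutation: `A` is a monomial
matrix. Conversely every invertible monomial matrix `A` together with `A ⊙ A` satisfies the
condition, and `(f, σ) ↦ (A, A ⊙ A)` is an injective homomorphism from `(ℚˣ)ⁿ ⋊ Σₙ` onto these
pairs.
-/

open MvPolynomial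

open Function Matrix

theorem sq_sum_C_mul_X_eq_sum_C_mul_X_sq_iff {ι R : Type*} [Fintype ι] [DecidableEq ι]
    [CommRing R] [IsDomain R] [NeZero (2 : R)] {a b : ι → R} :
    (∑ j, C (a j) * X j) ^ 2 = ∑ j, C (b j) * (X j : MvPolynomial ι R) ^ 2 ↔
      (support a).Subsingleton ∧ b = a ^ 2 := by
  constructor
  · intro h
    have hev (v : ι → R) : (∑ j, a j * v j) ^ 2 = ∑ j, b j * v j ^ 2 := by
      simpa only [map_sum, map_pow, map_mul, eval_C, eval_X] using
        congrArg (MvPolynomial.eval v) h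
    have hb : b = a ^ 2 := funext fun j => by
      simpa [Pi.single_apply, eq_comm] using (hev (Pi.single j 1)).symm
    refine ⟨fun j hj k hk => ?_, hb⟩
    by_contra hjk
    have hsum := hev (Pi.single j 1 + Pi.single k 1)
    rw [Fintype.sum_eq_add j k hjk fun m hm => by simp [hm.1, hm.2],
      Fintype.sum_eq_add j k hjk fun m hm => by simp [hm.1, hm.2]] at hsum
    simp only [Pi.add_apply, Pi.single_eq_same, Pi.single_eq_of_ne hjk, Pi.single_eq_of_ne' hjk,
      hb, Pi.pow_apply] at hsum
    have htwo : (2 : R) * (a j * a k) = 0 := by linear_combination hsum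
    exact mul_ne_zero hj hk ((mul_eq_zero.1 htwo).resolve_left two_ne_zero)
  · rintro ⟨ha, rfl⟩
    rw [sq, Finset.sum_mul_sum]
    refine Finset.sum_congr rfl fun j _ => ?_
    rw [Fintype.sum_eq_single j fun k hkj => ?_, Pi.pow_apply, C_pow, ← mul_pow, sq]
    by_cases hj : a j = 0
    · simp [hj]
    · have hk : a k = 0 := not_not.1 fun hk => hkj (ha hk hj)
      simp [hk]

theorem forall_sq_sum_C_mul_X_eq_iff {ι R : Type*} [Fintype ι] [DecidableEq ι] [CommRing R]
    [IsDomain R] [NeZero (2 : R)] {A B : Matrix ι ι R} :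
    (∀ i, (∑ j, C (A i j) * X j) ^ 2 = ∑ j, C (B i j) * (X j : MvPolynomial ι R) ^ 2) ↔
      (∀ i, (support (A i)).Subsingleton) ∧ B = A ⊙ A := by
  simp only [sq_sum_C_mul_X_eq_sum_C_mul_X_sq_iff, forall_and]
  refine and_congr_right' ⟨fun h => ?_, fun h i => ?_⟩
  · ext i j
    simp [h i, sq]
  · ext j
    simp [h, sq]

section MonomialMatrix

variable {ι R : Type*} [DecidableEq ι]

def monomialMatrix [Zero R] (σ : Equiv.Perm ι) (f : ι → R) : Matrix ι ι R :=
  of fun i => Pi.single (σ i) (f i)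

theorem monomialMatrix_apply [Zero R] (σ : Equiv.Perm ι) (f : ι → R) (i j : ι) :
    monomialMatrix σ f i j = if j = σ i then f i else 0 :=
  Pi.single_apply _ _ _

theorem support_monomialMatrix_row_subsingleton [Zero R] (σ : Equiv.Perm ι) (f : ι → R)
    (i : ι) :
    (support (monomialMatrix σ f i)).Subsingleton :=
  Set.subsingleton_singleton.anti Pi.support_single_subset

theorem monomialMatrix_hadamard [MulZeroClass R] (σ : Equiv.Perm ι) (f g : ι → R) :
    monomialMatrix σ f ⊙ monomialMatrix σ g = monomialMatrix σ (f * g) := by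
  ext i j
  simp only [hadamard_apply, monomialMatrix_apply]
  split_ifs <;> simp only [Pi.mul_apply, mul_zero]

theorem monomialMatrix_one_one [Zero R] [One R] :
    monomialMatrix (1 : Equiv.Perm ι) (1 : ι → R) = 1 := by
  ext i j
  simp [monomialMatrix_apply, one_apply, eq_comm]

theorem monomialMatrix_eq_one_iff [Zero R] [One R] {σ : Equiv.Perm ι} {f : ι → R}
    (hf : ∀ i, f i ≠ 0) :
    monomialMatrix σ f = 1 ↔ σ = 1 ∧ f = 1 := by
  refine ⟨fun h => ?_, fun ⟨hσ, hf⟩ => hσ ▸ hf ▸ monomialMatrix_one_one⟩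
  have hdiag (i : ι) : f i = if i = σ i then 1 else 0 := by
    simpa [monomialMatrix_apply, one_apply] using congrFun (congrFun h i) (σ i)
  have hfix (i : ι) : σ i = i := by
    by_contra hi
    exact hf i ((hdiag i).trans (if_neg (Ne.symm hi)))
  exact ⟨Equiv.ext hfix, funext fun i => by simpa [hfix i] using hdiag i⟩

variable [Fintype ι] [Semiring R]

theorem monomialMatrix_mul (σ τ : Equiv.Perm ι) (f g : ι → R) :
    monomialMatrix σ f * monomialMatrix τ g =
      monomialMatrix (σ.trans τ) fun i => f i * g (σ i) := by
  ext i j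
  simp only [mul_apply, monomialMatrix_apply σ, ite_mul, zero_mul, Finset.sum_ite_eq',
    Finset.mem_univ, if_true]
  simp only [monomialMatrix_apply, Equiv.trans_apply, mul_ite, mul_zero]
  rfl

end MonomialMatrix

theorem exists_eq_monomialMatrix_of_isUnit {ι R : Type*} [Fintype ι] [DecidableEq ι]
    [CommRing R] [Nontrivial R] {A : Matrix ι ι R} (hA : IsUnit A)
    (hrow : ∀ i, (support (A i)).Subsingleton) :
    ∃ σ : Equiv.Perm ι, (∀ i, A i (σ i) ≠ 0) ∧ A = monomialMatrix σ fun i => A i (σ i) := by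
  have hdet : A.det ≠ 0 := ((isUnit_iff_isUnit_det A).1 hA).ne_zero
  have hrow_ne (i : ι) : ∃ j, A i j ≠ 0 := by
    by_contra! h
    exact hdet (det_eq_zero_of_row_eq_zero i h)
  choose c hc using hrow_ne
  have hc_eq {i j : ι} (hij : A i j ≠ 0) : j = c i := hrow i hij (hc i)
  have hsurj : Surjective c := fun j => by
    by_contra! h
    exact hdet <| det_eq_zero_of_column_eq_zero j fun i =>
      not_not.1 fun hij => h i (hc_eq hij).symm
  refine ⟨Equiv.ofBijective c hsurj.bijective_of_finite, hc, ?_⟩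
  ext i j
  rw [monomialMatrix_apply, Equiv.ofBijective_apply]
  split_ifs with hj
  · rw [hj]
  · exact not_not.1 fun hij => hj (hc_eq hij)

section SemidirectProduct

variable {ι R : Type*} [Fintype ι] [DecidableEq ι] [CommRing R]
  (φ : Equiv.Perm ι →* MulAut (ι → Rˣ)) (hφ : ∀ σ f i, φ σ f i = f (σ⁻¹ i))

-- `p.right⁻¹` because `Perm` multiplies by composition while `monomialMatrix_mul` uses `trans`.
def monomialMatrixHom : (ι → Rˣ) ⋊[φ] Equiv.Perm ι →* Matrix ι ι R where
  toFun p := monomialMatrix p.right⁻¹ fun i => p.left i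
  map_one' := monomialMatrix_one_one
  map_mul' p q := by
    rw [monomialMatrix_mul]
    congr 1
    ext i
    simp [hφ]

theorem monomialMatrixHom_injective [Nontrivial R] : Injective (monomialMatrixHom φ hφ) := by
  refine (injective_iff_map_eq_one _).2 fun p hp => ?_
  obtain ⟨hσ, hf⟩ := (monomialMatrix_eq_one_iff fun i => (p.left i).ne_zero).1 hp
  exact SemidirectProduct.ext (funext fun i => Units.ext (congrFun hf i)) (inv_eq_one.1 hσ)

-- `(f, σ)` acts by `xᵢ ↦ fᵢ x_{σ⁻¹ i}`, `yᵢ ↦ fᵢ² y_{σ⁻¹ i}`; the pair holds the two matrices.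
def sullivanAutHom : (ι → Rˣ) ⋊[φ] Equiv.Perm ι →* GL ι R × GL ι R :=
  (monomialMatrixHom φ hφ).toHomUnits.prod <| (monomialMatrixHom φ hφ).toHomUnits.comp <|
    SemidirectProduct.map (powMonoidHom 2) (MonoidHom.id _) fun σ => by ext; simp

theorem sullivanAutHom_injective [Nontrivial R] : Injective (sullivanAutHom φ hφ) :=
  fun _ _ h => monomialMatrixHom_injective φ hφ (congrArg (fun P => (P.1 : Matrix ι ι R)) h)

theorem sullivanAutHom_fst (p : (ι → Rˣ) ⋊[φ] Equiv.Perm ι) :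
    ((sullivanAutHom φ hφ p).1 : Matrix ι ι R) =
      monomialMatrix p.right⁻¹ fun i => (p.left i : R) :=
  rfl

theorem sullivanAutHom_snd (p : (ι → Rˣ) ⋊[φ] Equiv.Perm ι) :
    ((sullivanAutHom φ hφ p).2 : Matrix ι ι R) =
      (sullivanAutHom φ hφ p).1 ⊙ ((sullivanAutHom φ hφ p).1 : Matrix ι ι R) := by
  rw [sullivanAutHom_fst, monomialMatrix_hadamard]
  change monomialMatrix p.right⁻¹ (fun i => ((p.left ^ 2) i : R)) = _
  congr 1
  ext i
  simp [sq]

end SemidirectProduct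

theorem mem_range_sullivanAutHom_iff {ι K : Type*} [Fintype ι] [DecidableEq ι] [Field K]
    (φ : Equiv.Perm ι →* MulAut (ι → Kˣ)) (hφ : ∀ σ f i, φ σ f i = f (σ⁻¹ i))
    (P : GL ι K × GL ι K) :
    P ∈ (sullivanAutHom φ hφ).range ↔
      (∀ i, (support ((P.1 : Matrix ι ι K) i)).Subsingleton) ∧
        (P.2 : Matrix ι ι K) = P.1 ⊙ (P.1 : Matrix ι ι K) := by
  constructor
  · rintro ⟨p, rfl⟩
    exact ⟨support_monomialMatrix_row_subsingleton _ _, sullivanAutHom_snd φ hφ p⟩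
  · rintro ⟨hrow, hsnd⟩
    obtain ⟨σ, hσ, hA⟩ := exists_eq_monomialMatrix_of_isUnit P.1.isUnit hrow
    let p : (ι → Kˣ) ⋊[φ] Equiv.Perm ι := ⟨fun i => Units.mk0 _ (hσ i), σ⁻¹⟩
    have hfst : ((sullivanAutHom φ hφ p).1 : Matrix ι ι K) = P.1 := by
      rw [sullivanAutHom_fst, inv_inv]
      exact hA.symm
    refine ⟨p, Prod.ext (Units.ext hfst) (Units.ext ?_)⟩
    rw [sullivanAutHom_snd, hfst, hsnd]

/-- **Automorphisms of the minimal Sullivan model of `(S^d)^n`, `d` even.**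
A dg-algebra automorphism `φ` of `Λ = (Λ(x₁,…,xₙ,y₁,…,yₙ), dyᵢ = xᵢ²)` (with `|xᵢ| = d`
even, `|yᵢ| = 2d-1`) is determined by the invertible matrices `A`, `B` of its action on the
generators: `φ(xᵢ) = ∑ⱼ Aᵢⱼ xⱼ`, `φ(yᵢ) = ∑ⱼ Bᵢⱼ yⱼ`, subject to the compatibility with the
differential `φ(xᵢ²) = ∑ⱼ Bᵢⱼ xⱼ²`, i.e. `(∑ⱼ Aᵢⱼ xⱼ)² = ∑ⱼ Bᵢⱼ xⱼ²` in the polynomial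
algebra on the `xⱼ`.  Then every such automorphism is of the form `φ(xᵢ) = λᵢ x_{σ(i)}`,
`φ(yᵢ) = λᵢ² y_{σ(i)}` for a permutation `σ` and nonzero scalars `λᵢ`; consequently the
group of such pairs `(A, B)` is isomorphic to `Σₙ ⋉ (ℚˣ)ⁿ`. -/
theorem automorphisms_of_sullivan_model_even_spheres
    (n : ℕ)
    (φact : Equiv.Perm (Fin n) →* MulAut (Fin n → ℚˣ))
    (hφact : ∀ (σ : Equiv.Perm (Fin n)) (f : Fin n → ℚˣ) (i : Fin n),
      φact σ f i = f (σ⁻¹ i)) :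
    (∀ A B : Matrix (Fin n) (Fin n) ℚ, IsUnit A → IsUnit B →
      (∀ i : Fin n,
        (∑ j : Fin n, MvPolynomial.C (A i j) * X j) ^ 2 =
          ∑ j : Fin n, MvPolynomial.C (B i j) * (X j : MvPolynomial (Fin n) ℚ) ^ 2) →
      ∃ (σ : Equiv.Perm (Fin n)) (lam : Fin n → ℚ),
        (∀ i, lam i ≠ 0) ∧
        (∀ i j, A i j = if j = σ i then lam i else 0) ∧
        (∀ i j, B i j = if j = σ i then (lam i) ^ 2 else 0)) ∧
    ∃ S : Subgroup (GL (Fin n) ℚ × GL (Fin n) ℚ),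
      (∀ P : GL (Fin n) ℚ × GL (Fin n) ℚ,
        P ∈ S ↔ ∀ i : Fin n,
          (∑ j : Fin n, MvPolynomial.C ((P.1 : Matrix (Fin n) (Fin n) ℚ) i j) * X j) ^ 2 =
            ∑ j : Fin n, MvPolynomial.C ((P.2 : Matrix (Fin n) (Fin n) ℚ) i j) *
              (X j : MvPolynomial (Fin n) ℚ) ^ 2) ∧
      Nonempty (S ≃* SemidirectProduct (Fin n → ℚˣ) (Equiv.Perm (Fin n)) φact) := by
  refine ⟨fun A B hA _ h => ?_, (sullivanAutHom φact hφact).range, fun P => ?_,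
    ⟨(MonoidHom.ofInjective (sullivanAutHom_injective φact hφact)).symm⟩⟩
  · obtain ⟨hrow, rfl⟩ := forall_sq_sum_C_mul_X_eq_iff.1 h
    obtain ⟨σ, hσ, hA⟩ := exists_eq_monomialMatrix_of_isUnit hA hrow
    have hentry (i j : Fin n) : A i j = if j = σ i then A i (σ i) else 0 := by
      conv_lhs => rw [hA]
      exact monomialMatrix_apply _ _ i j
    refine ⟨σ, fun i => A i (σ i), hσ, hentry, fun i j => ?_⟩
    rw [hadamard_apply, hentry i j]
    split_ifs <;> ring
  · rw [mem_range_sullivanAutHom_iff, forall_sq_sum_C_mul_X_eq_iff]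
end

section
/- Let Λ = ΛV be a free graded-commutative algebra on a finite-dimensional positively graded vector space V, and fix a homogeneous basis x_1, …, x_k of V. If a graded algebra automorphism φ of Λ satisfies φ ∘ (∂/∂x_i) ∘ φ⁻¹ = ∂/∂x_i for all i (i.e., φ acts trivially by conjugation on the span of the derivations ∂/∂x_1, …, ∂/∂x_k), then φ is the identity. -/
open MvPolynomial

lemma coeff_pderiv' (k : ℕ) (i : Fin k) (q : MvPolynomial (Fin k) ℚ) (n : Fin k →₀ ℕ) :
    coeff n (pderiv i q) = ((n i : ℚ) + 1) * coeff (n + Finsupp.single i 1) q := by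
  induction q using MvPolynomial.induction_on' with
  | monomial m a =>
    rw [pderiv_monomial, coeff_monomial, coeff_monomial]
    by_cases h : m = n + Finsupp.single i 1
    · subst h
      simp [Finsupp.add_apply, Finsupp.single_apply]
      ring
    · rw [if_neg h]
      by_cases hm : m i = 0
      · simp [hm]
      · rw [if_neg]
        · ring
        · intro hc
          apply h
          ext x
          have := DFunLike.congr_fun hc x
          simp [Finsupp.sub_apply, Finsupp.single_apply] at this
          simp [Finsupp.single_apply]
          by_cases hx : i = x
          · subst hx; simp at this ⊢; omega
          · simp [hx] at this ⊢; omega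
  | add p q hp hq => simp [hp, hq]; ring


/-- **An automorphism of a free (graded-)commutative algebra acting trivially by conjugation
on the derivations `∂/∂xᵢ` is the identity.**  Here the free commutative algebra on a basis
`x₁, …, x_k` is modelled by the polynomial algebra `ℚ[x₁, …, x_k]`; the hypothesis that `φ`
is induced by a graded automorphism of a positively graded vector space is reflected in the
requirement that `φ(xⱼ)` has no constant term.  If `φ ∘ (∂/∂xᵢ) ∘ φ⁻¹ = ∂/∂xᵢ` for all `i`,
then `φ` is the identity. -/
theorem automorphism_trivial_conjugation_on_partials_is_id
    (k : ℕ) (φ : MvPolynomial (Fin k) ℚ ≃ₐ[ℚ] MvPolynomial (Fin k) ℚ)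
    (hgr : ∀ j : Fin k, constantCoeff (φ (X j)) = 0)
    (hconj : ∀ (i : Fin k) (p : MvPolynomial (Fin k) ℚ),
      φ (pderiv i (φ.symm p)) = pderiv i p) :
    φ = AlgEquiv.refl := by
  have hX : ∀ j : Fin k, φ (X j) = X j := by
    intro j
    have hd : ∀ i : Fin k, pderiv i (φ.symm (X j)) = if i = j then 1 else 0 := by
      intro i
      have h1 := hconj i (X j)
      have h2 : pderiv i (φ.symm (X j)) = φ.symm (pderiv i (X j)) := by
        rw [← h1, AlgEquiv.symm_apply_apply]
      by_cases hij : i = j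
      · subst hij; rw [h2, pderiv_X_self, map_one, if_pos rfl]
      · rw [h2, pderiv_X_of_ne (Ne.symm hij), map_zero, if_neg hij]
    have hqX : φ.symm (X j) = X j + C (constantCoeff (φ.symm (X j))) := by
      ext m
      rw [coeff_add, coeff_X', coeff_C]
      by_cases hm : m = 0
      · subst hm
        rw [if_pos rfl, if_neg (by
          intro h
          exact absurd (DFunLike.congr_fun h j) (by simp))]
        simp [← constantCoeff_eq]
      · rw [show (if (0:Fin k →₀ ℕ) = m then constantCoeff (φ.symm (X j)) else 0) = 0
              from if_neg (fun h => hm h.symm), add_zero]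
        obtain ⟨i, hi⟩ : ∃ i, m i ≠ 0 := by
          by_contra h
          push_neg at h
          exact hm (Finsupp.ext h)
        have hmn : m = (m - Finsupp.single i 1) + Finsupp.single i 1 := by
          ext x
          simp [Finsupp.sub_apply, Finsupp.single_apply]
          by_cases hx : i = x
          · subst hx; simp; omega
          · simp [hx]
        have key := coeff_pderiv' k i (φ.symm (X j)) (m - Finsupp.single i 1)
        rw [hd i, ← hmn] at key
        by_cases hij : i = j
        · rw [if_pos hij] at key
          by_cases hn0 : m - Finsupp.single i 1 = 0
          · rw [hn0] at key hmn
            simp at key hmn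
            rw [if_pos (by rw [hmn, hij])]
            linarith [key]
          · rw [coeff_one, if_neg (fun h => hn0 h.symm)] at key
            have hq0 : coeff m (φ.symm (X j)) = 0 := by
              rcases mul_eq_zero.mp key.symm with h | h
              · exact absurd h (Nat.cast_add_one_ne_zero _)
              · exact h
            rw [hq0, if_neg]
            intro h
            apply hn0
            rw [hmn] at h
            ext x
            have := DFunLike.congr_fun h x
            rw [← hij] at this
            simp [Finsupp.add_apply, Finsupp.single_apply] at this ⊢
            omega
        · rw [if_neg hij] at key
          simp only [coeff_zero] at key
          have hq0 : coeff m (φ.symm (X j)) = 0 := by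
            rcases mul_eq_zero.mp key.symm with h | h
            · exact absurd h (Nat.cast_add_one_ne_zero _)
            · exact h
          rw [hq0, if_neg]
          intro h
          have := DFunLike.congr_fun h i
          rw [hmn] at this
          simp [Finsupp.single_apply, Finsupp.add_apply] at this
          rw [if_neg (fun hh => hij hh.symm)] at this
          omega
    have hCc : φ (C (constantCoeff (φ.symm (X j)))) = C (constantCoeff (φ.symm (X j))) := by
      rw [← MvPolynomial.algebraMap_eq]
      exact φ.commutes _
    have h3 : X j = φ (X j) + C (constantCoeff (φ.symm (X j))) := by
      have := congrArg φ hqX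
      rwa [AlgEquiv.apply_symm_apply, map_add, hCc] at this
    have hc0 : constantCoeff (φ.symm (X j)) = 0 := by
      have := congrArg constantCoeff h3
      simpa [hgr j] using this.symm
    have h4 : φ.symm (X j) = X j := by rw [hqX, hc0, map_zero, add_zero]
    have h5 := congrArg φ h4
    rw [AlgEquiv.apply_symm_apply] at h5
    exact h5.symm
  suffices h : ∀ p : MvPolynomial (Fin k) ℚ, φ p = p by
    apply AlgEquiv.ext
    intro p
    rw [h p]
    rfl
  intro p
  induction p using MvPolynomial.induction_on with
  | C a =>
    show φ (C a) = C a
    rw [← MvPolynomial.algebraMap_eq]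
    exact φ.commutes a
  | add p q hp hq => rw [map_add, hp, hq]
  | mul_X p i hp => rw [map_mul, hp, hX i]
end

section
/- Let G be a group acting on an abelian group M, and suppose G acts nilpotently on M ⊗ ℚ, i.e. there is a filtration 0 = V_0 ⊆ ⋯ ⊆ V_n = M ⊗ ℚ by G-submodules with trivial action on quotients. Let W_i ⊆ M be the preimage of V_i under M → M ⊗ ℚ, and let T ≤ G be the subgroup acting trivially on the torsion subgroup of M. Then each W_i is a G-submodule of M, G acts trivially on W_i/W_{i−1} for 1 ≤ i ≤ n, W_0 equals the torsion subgroup of M (when M is finitely generated), and consequently the finite-index-in-G subgroup G ∩ T acts nilpotently on M. In particular, if M is torsion-free then G itself acts nilpotently on M. -/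
/-- A set `S` of elements of a group `G` acting on an abelian group `M` acts *nilpotently*
if `M` has a finite filtration by subgroups along which every `g ∈ S` acts trivially on the
successive quotients. -/
def ActsNilpotentlyOn (G M : Type*) [Group G] [AddCommGroup M] [DistribMulAction G M]
    (S : Set G) : Prop :=
  ∃ (r : ℕ) (F : ℕ → AddSubgroup M), F 0 = ⊥ ∧ F r = ⊤ ∧ (∀ i, F i ≤ F (i + 1)) ∧
    (∀ (i : ℕ), ∀ g ∈ S, ∀ x ∈ F (i + 1), g • x - x ∈ F i) ∧
    (∀ (i : ℕ), ∀ g ∈ S, ∀ x ∈ F i, g • x ∈ F i)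

/-- **Nilpotent action on the rationalization and virtual nilpotence of the integral
action.**  Let `G` act on a finitely generated abelian group `M`, let `j : M → V` be the
rationalization (`V = M ⊗ ℚ`): an equivariant map to a `ℚ`-vector space with `G` acting
linearly, whose kernel is the torsion subgroup and such that every `v ∈ V` has a positive
multiple in the image.  Suppose `G` acts nilpotently on `V` via a filtration
`⊥ = V₀ ⊆ ⋯ ⊆ Vₙ = ⊤` of `G`-submodules with trivial action on quotients.  Let
`Wᵢ = j⁻¹(Vᵢ)`.  Then each `Wᵢ` is a `G`-stable subgroup, `G` acts trivially on
`Wᵢ/Wᵢ₋₁` for `1 ≤ i ≤ n`, `W₀` is the torsion subgroup of `M`, the subgroup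
`T = {g : g acts trivially on the torsion}` has finite index and acts nilpotently on `M`;
in particular if `M` is torsion-free then all of `G` acts nilpotently on `M`. -/
theorem nilpotent_action_on_rationalization
    (G : Type*) [Group G] (M : Type*) [AddCommGroup M] [DistribMulAction G M]
    (hfg : AddGroup.FG M)
    (V : Type*) [AddCommGroup V] [Module ℚ V] [DistribMulAction G V]
    (hlin : ∀ (g : G) (q : ℚ) (v : V), g • (q • v) = q • (g • v))
    (j : M →+ V)
    (hjG : ∀ (g : G) (m : M), j (g • m) = g • j m)
    (hker : ∀ m : M, j m = 0 ↔ ∃ n : ℕ, 0 < n ∧ n • m = 0)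
    (hdense : ∀ v : V, ∃ (n : ℕ) (m : M), 0 < n ∧ (n : ℚ) • v = j m)
    (n : ℕ) (Vf : ℕ → Submodule ℚ V)
    (hV0 : Vf 0 = ⊥) (hVn : Vf n = ⊤) (hVmono : ∀ i, Vf i ≤ Vf (i + 1))
    (hVinv : ∀ (i : ℕ) (g : G), ∀ v ∈ Vf i, g • v ∈ Vf i)
    (hVtriv : ∀ (i : ℕ) (g : G), ∀ v ∈ Vf (i + 1), g • v - v ∈ Vf i)
    (W : ℕ → Set M) (hW : ∀ i, W i = {m : M | j m ∈ Vf i})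
    (T : Subgroup G)
    (hT : ∀ g : G, g ∈ T ↔ ∀ x : M, (∃ k : ℕ, 0 < k ∧ k • x = 0) → g • x = x) :
    (∀ (i : ℕ) (g : G), ∀ x ∈ W i, g • x ∈ W i) ∧
    (∀ (i : ℕ) (g : G), ∀ x ∈ W (i + 1), g • x - x ∈ W i) ∧
    (∀ x : M, x ∈ W 0 ↔ ∃ k : ℕ, 0 < k ∧ k • x = 0) ∧
    T.FiniteIndex ∧
    ActsNilpotentlyOn G M (T : Set G) ∧
    ((∀ x : M, (∃ k : ℕ, 0 < k ∧ k • x = 0) → x = 0) →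
      ActsNilpotentlyOn G M Set.univ) := by
  have hWmem : ∀ i (x : M), x ∈ W i ↔ j x ∈ Vf i := by
    intro i x; rw [hW]; rfl
  have hmono : Monotone Vf := monotone_nat_of_le_succ hVmono
  -- part 1: invariance
  have part1 : ∀ (i : ℕ) (g : G), ∀ x ∈ W i, g • x ∈ W i := by
    intro i g x hx
    rw [hWmem] at hx ⊢
    rw [hjG]
    exact hVinv i g _ hx
  -- part 2: trivial action on quotients
  have part2 : ∀ (i : ℕ) (g : G), ∀ x ∈ W (i + 1), g • x - x ∈ W i := by
    intro i g x hx
    rw [hWmem] at hx ⊢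
    rw [map_sub, hjG]
    exact hVtriv i g _ hx
  -- part 3: W 0 is the torsion
  have part3 : ∀ x : M, x ∈ W 0 ↔ ∃ k : ℕ, 0 < k ∧ k • x = 0 := by
    intro x
    rw [hWmem, hV0, Submodule.mem_bot, hker]
  -- the torsion subgroup, i.e. the kernel of j
  set S : AddSubgroup M := j.ker with hS
  have hSmem : ∀ x : M, x ∈ S ↔ ∃ k : ℕ, 0 < k ∧ k • x = 0 := by
    intro x; rw [AddMonoidHom.mem_ker, hker]
  have hSinv : ∀ (g : G), ∀ x ∈ S, g • x ∈ S := by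
    intro g x hx
    rw [AddMonoidHom.mem_ker] at hx ⊢
    rw [hjG, hx, smul_zero]
  -- S is finite
  haveI : Module.Finite ℤ M := Module.Finite.iff_addGroup_fg.mpr hfg
  haveI : IsNoetherian ℤ M := isNoetherian_of_isNoetherianRing_of_finite ℤ M
  haveI : AddGroup.FG ↥S := by
    rw [← Module.Finite.iff_addGroup_fg (G := ↥S)]
    have : (AddSubgroup.toIntSubmodule S).FG := IsNoetherian.noetherian _
    exact Module.Finite.iff_fg.mpr this
  haveI hSfin : Finite ↥S := by
    apply AddCommGroup.finite_of_fg_torsion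
    intro x
    rw [isOfFinAddOrder_iff_nsmul_eq_zero]
    obtain ⟨k, hk, hkx⟩ := (hSmem x.1).mp x.2
    exact ⟨k, hk, Subtype.ext (by simpa using hkx)⟩
  -- action of G on S
  letI : MulAction G ↥S :=
    { smul := fun g x => ⟨g • x.1, hSinv g x.1 x.2⟩
      one_smul := fun x => Subtype.ext (one_smul G x.1)
      mul_smul := fun g h x => Subtype.ext (mul_smul g h x.1) }
  have hsmulS : ∀ (g : G) (x : ↥S), (g • x).1 = g • x.1 := fun _ _ => rfl
  -- T is the kernel of the permutation representation on S
  have hTker : T = (MulAction.toPermHom G ↥S).ker := by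
    ext g
    have hker' : g ∈ (MulAction.toPermHom G ↥S).ker ↔ ∀ y : ↥S, g • y = y := by
      rw [MonoidHom.mem_ker, Equiv.ext_iff]
      exact Iff.rfl
    rw [hker', hT]
    constructor
    · intro h y
      exact Subtype.ext (h y.1 ((hSmem y.1).mp y.2))
    · intro h x hx
      exact congrArg Subtype.val (h ⟨x, (hSmem x).mpr hx⟩)
  have part4 : T.FiniteIndex := by
    rw [hTker]
    exact Subgroup.finiteIndex_ker _
  -- nilpotency for any set acting trivially on torsion
  have key : ∀ (Sg : Set G), (∀ g ∈ Sg, ∀ x : M, (∃ k : ℕ, 0 < k ∧ k • x = 0) → g • x = x) →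
      ActsNilpotentlyOn G M Sg := by
    intro Sg hSg
    refine ⟨n + 1, fun i => match i with
      | 0 => ⊥
      | (k+1) => AddSubgroup.comap j (Vf (min k n)).toAddSubgroup, rfl, ?_, ?_, ?_, ?_⟩
    · ext x
      simp [AddSubgroup.mem_comap, Submodule.mem_toAddSubgroup, min_self, hVn]
    · intro i
      match i with
      | 0 => exact bot_le
      | (k+1) =>
        intro x hx
        rw [AddSubgroup.mem_comap, Submodule.mem_toAddSubgroup] at hx ⊢
        exact hmono (min_le_min (Nat.le_succ k) le_rfl) hx
    · intro i g hg x hx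
      match i with
      | 0 =>
        rw [AddSubgroup.mem_comap, Submodule.mem_toAddSubgroup] at hx
        simp only [Nat.min_def, Nat.zero_le, if_pos] at hx
        rw [hV0, Submodule.mem_bot, hker] at hx
        rw [hSg g hg x hx, sub_self]
        exact AddSubgroup.zero_mem _
      | (k+1) =>
        rw [AddSubgroup.mem_comap, Submodule.mem_toAddSubgroup] at hx ⊢
        rw [map_sub, hjG]
        rcases le_or_gt (k + 1) n with hkn | hkn
        · rw [min_eq_left hkn] at hx
          rw [min_eq_left (Nat.le_of_succ_le hkn)]
          exact hVtriv k g _ hx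
        · rw [min_eq_right (Nat.lt_succ_iff.mp hkn)]
          rw [hVn]
          exact Submodule.mem_top
    · intro i g hg x hx
      match i with
      | 0 =>
        rw [AddSubgroup.mem_bot] at hx ⊢
        rw [hx, smul_zero]
      | (k+1) =>
        rw [AddSubgroup.mem_comap, Submodule.mem_toAddSubgroup] at hx ⊢
        rw [hjG]
        exact hVinv _ g _ hx
  refine ⟨part1, part2, part3, part4, ?_, ?_⟩
  · exact key _ (fun g hg => (hT g).mp hg)
  · intro htf
    apply key
    intro g _ x hx
    rw [htf x hx, smul_zero]
end
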